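/- arXiv:1702.04382 — 3 statements merged into one kernel-verified Lean document; each statement's English description precedes it below -/
import Mathlib

section
/- Let 𝓛 = L{{T_1}}…{{T_{d−1}}} with L/S a finite extension of local fields. Then R_{𝓛,1} = { x ∈ 𝓛 : v_𝓛(x) ≥ −v_L(D(L/S)) − ⌊v_L(p)/(p−1)⌋ − 1 }, where D(L/S) is the different of the extension L/S and v_𝓛 is the discrete valuation of 𝓛 (which restricts to v_L on L). -/
/-!
Embed `L` into `𝓛` as the constant series. This embedding is a section of the constant-coefficient
map and preserves valuations, while the valuation of a series is at most that of each of its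
coefficients. Hence `𝕋(x y)` is integral as soon as `v(x) + v(y) ≥ -v_L(D(L/S))`. Conversely, for
`x ≠ 0` the test elements `y = x⁻¹ a` with `a ∈ L` turn the condition on `x` into the trace-duality
condition characterising the inverse different, at valuation `v(x) + ⌊v_L(p)/(p−1)⌋ + 1`.

That constants keep their valuation is forced by multiplicativity: up the tower one only gets
`v(a) = min(v_L(a), c)` for some constant `c`, and such a truncation of a discrete valuation is
multiplicative only when `c = ∞`.
-/

/-- Axioms for a (rank-one) discrete valuation `v` on a field `F`, written additively with
`v 0 = ⊤` and value group `ℤ`. -/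
structure IsDiscVal {F : Type*} [Field F] (v : F → WithTop ℤ) : Prop where
  eq_top_iff : ∀ x, v x = ⊤ ↔ x = 0
  map_mul : ∀ x y, v (x * y) = v x + v y
  min_le_add : ∀ x y, min (v x) (v y) ≤ v (x + y)
  exists_uniformizer : ∃ x, v x = 1

namespace IsDiscVal

variable {F : Type*} [Field F] {v : F → WithTop ℤ}

theorem v_one (hv : IsDiscVal v) : v 1 = 0 := by
  have h1 : v 1 ≠ ⊤ := fun h => one_ne_zero ((hv.eq_top_iff 1).mp h)
  obtain ⟨n, hn⟩ := WithTop.ne_top_iff_exists.mp h1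
  have hmul := hv.map_mul 1 1
  rw [mul_one, ← hn] at hmul
  have hn0 : n = n + n := by exact_mod_cast hmul
  have : n = 0 := by omega
  simp [← hn, this]

theorem v_neg_one (hv : IsDiscVal v) : v (-1) = 0 := by
  have h1 : v (-1) ≠ ⊤ := fun h => (by simp : (-1 : F) ≠ 0) ((hv.eq_top_iff (-1)).mp h)
  obtain ⟨n, hn⟩ := WithTop.ne_top_iff_exists.mp h1
  have hmul := hv.map_mul (-1) (-1)
  rw [neg_one_mul, neg_neg, hv.v_one, ← hn] at hmul
  have hn0 : n + n = (0 : ℤ) := by exact_mod_cast hmul.symm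
  have : n = 0 := by omega
  simp [← hn, this]

theorem v_neg (hv : IsDiscVal v) (x : F) : v (-x) = v x := by
  have h := hv.map_mul (-1) x
  rw [neg_one_mul, hv.v_neg_one, zero_add] at h
  exact h

theorem v_zero (hv : IsDiscVal v) : v 0 = ⊤ := (hv.eq_top_iff 0).mpr rfl

/-- The valuation (sub)ring `O = {x | v x ≥ 0}` of a discretely valued field. -/
noncomputable def subring (hv : IsDiscVal v) : Subring F where
  carrier := {x | 0 ≤ v x}
  zero_mem' := by simp only [Set.mem_setOf_eq, hv.v_zero]; exact le_top
  one_mem' := by simp [Set.mem_setOf_eq, hv.v_one]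
  add_mem' := fun {a b} ha hb => le_trans (le_min ha hb) (hv.min_le_add a b)
  mul_mem' := fun {a b} ha hb => by
    simpa [Set.mem_setOf_eq, hv.map_mul a b] using add_nonneg ha hb
  neg_mem' := fun {a} ha => by
    simpa only [Set.mem_setOf_eq, hv.v_neg a] using ha

theorem mem_subring_iff (hv : IsDiscVal v) (x : F) : x ∈ hv.subring ↔ 0 ≤ v x := Iff.rfl

end IsDiscVal

universe u

/-- Axiomatization of the two-dimensional step `F = E{{T}}`: the complete discrete valuation
field of series `Σ_{i ∈ ℤ} a_i T^i` with `a_i ∈ E`, `inf_i v_E(a_i) > −∞` and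
`v_E(a_i) → +∞` as `i → −∞`, with `v_F(x) = min_i v_E(a_i)`. -/
structure AmpleStr (E : Type u) (F : Type u) [Field E] [Field F]
    (vE : E → WithTop ℤ) (vF : F → WithTop ℤ) where
  /-- the inclusion `E ⊆ E{{T}}` -/
  emb : E →+* F
  /-- the variable `T` -/
  T : F
  /-- the coefficient functionals `x = Σ a_i T^i ↦ a_i` -/
  coeff : ℤ → F →+ E
  coeff_emb : ∀ (a : E) (i : ℤ), coeff i (emb a) = if i = 0 then a else 0
  coeff_emb_mul : ∀ (a : E) (x : F) (i : ℤ), coeff i (emb a * x) = a * coeff i x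
  coeff_mul_T : ∀ (x : F) (i : ℤ), coeff i (x * T) = coeff (i - 1) x
  coeff_inj : ∀ x y : F, (∀ i, coeff i x = coeff i y) → x = y
  v_isLeast : ∀ x : F, x ≠ 0 → IsLeast (Set.range fun i => vE (coeff i x)) (vF x)
  complete : ∀ f : ℤ → E,
      (∃ c : ℤ, ∀ i, (c : WithTop ℤ) ≤ vE (f i)) →
      (∀ M : ℤ, ∃ N : ℤ, ∀ i ≤ N, (M : WithTop ℤ) ≤ vE (f i)) →
      ∃ x : F, ∀ i, coeff i x = f i

/-- Axiomatization of the standard `d`-dimensional local field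
`𝓚 = L{{T_1}}…{{T_{d−1}}}` over the complete discrete valuation field `L`, presented as a
tower of fields `F 0 = L`, `F (j+1) = (F j){{T_{j+1}}}`, with top `F (d−1) = 𝓚`. -/
structure AmpleTower (d : ℕ) (L : Type u) [Field L] (vL : L → WithTop ℤ)
    (𝓚 : Type u) [Field 𝓚] (v𝓚 : 𝓚 → WithTop ℤ) where
  F : ℕ → Type u
  field : ∀ j, Field (F j)
  v : ∀ j, F j → WithTop ℤ
  baseEquiv : letI := field 0; L ≃+* F 0
  v_base : ∀ x : L, v 0 (baseEquiv x) = vL x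
  step : ∀ j, j < d - 1 →
    @AmpleStr (F j) (F (j + 1)) (field j) (field (j + 1)) (v j) (v (j + 1))
  topEquiv : letI := field (d - 1); F (d - 1) ≃+* 𝓚
  v_top : ∀ x, v𝓚 (topEquiv x) = v (d - 1) x

attribute [instance] AmpleTower.field

namespace AmpleTower

variable {d : ℕ} {L 𝓚 : Type u} [Field L] [Field 𝓚]
  {vL : L → WithTop ℤ} {v𝓚 : 𝓚 → WithTop ℤ}

/-- Iterated extraction of the constant coefficient, down the tower. -/
noncomputable def cc (tw : AmpleTower d L vL 𝓚 v𝓚) :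
    ∀ j, j ≤ d - 1 → tw.F j → L
  | 0, _, x => tw.baseEquiv.symm x
  | j + 1, h, x => tw.cc j (by omega) ((tw.step j (by omega)).coeff 0 x)

/-- The constant-coefficient map `c_{𝓚/L} : 𝓚 → L` (the coefficient of
`T_1^0 ⋯ T_{d−1}^0`). -/
noncomputable def constCoeff (tw : AmpleTower d L vL 𝓚 v𝓚) : 𝓚 → L :=
  fun x => tw.cc (d - 1) le_rfl (tw.topEquiv.symm x)

/-- Embedding of an intermediate field of the tower into the top field. -/
noncomputable def upHom (tw : AmpleTower d L vL 𝓚 v𝓚) :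
    ∀ m, m ≤ d - 1 → (tw.F m →+* tw.F (d - 1))
  | m, _h =>
    if hm : m = d - 1 then cast (by subst hm; rfl) (RingHom.id (tw.F m))
    else (tw.upHom (m + 1) (by omega)).comp (tw.step m (by omega)).emb
  termination_by m => d - 1 - m
  decreasing_by omega

/-- The local uniformizers `T_1, …, T_{d−1}` of `𝓚` (as elements of the top field);
here `0 ≤ j < d − 1` indexes `T_{j+1}`. -/
noncomputable def Tvar (tw : AmpleTower d L vL 𝓚 v𝓚) (j : ℕ) (h : j < d - 1) : 𝓚 :=
  tw.topEquiv (tw.upHom (j + 1) (by omega) ((tw.step j h).T))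

/-- The inclusion `L ⊆ 𝓚`, as a ring homomorphism. -/
noncomputable def embL (tw : AmpleTower d L vL 𝓚 v𝓚) : L →+* 𝓚 :=
  (tw.topEquiv.toRingHom.comp (tw.upHom 0 (Nat.zero_le _))).comp tw.baseEquiv.toRingHom

end AmpleTower

namespace IsDiscVal

variable {F : Type*} [Field F] {v : F → WithTop ℤ}

theorem exists_eq_coe (hv : IsDiscVal v) {x : F} (hx : x ≠ 0) : ∃ t : ℤ, v x = t := by
  obtain ⟨t, ht⟩ := WithTop.ne_top_iff_exists.mp fun h => hx ((hv.eq_top_iff x).mp h)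
  exact ⟨t, ht.symm⟩

theorem v_inv_of_eq (hv : IsDiscVal v) {x : F} {t : ℤ} (hx : v x = t) :
    v x⁻¹ = ((-t : ℤ) : WithTop ℤ) := by
  have hx0 : x ≠ 0 := by rintro rfl; simp [hv.v_zero] at hx
  obtain ⟨s, hs⟩ := hv.exists_eq_coe (inv_ne_zero hx0)
  have h := hv.map_mul x x⁻¹
  rw [mul_inv_cancel₀ hx0, hv.v_one, hx, hs] at h
  have : (0 : ℤ) = t + s := by exact_mod_cast h
  rw [hs]
  exact_mod_cast (by omega : s = -t)

theorem v_zpow (hv : IsDiscVal v) {u : F} (hu : v u = 1) (n : ℤ) : v (u ^ n) = n := by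
  have hu0 : u ≠ 0 := by rintro rfl; simp [hv.v_zero] at hu
  induction n using Int.induction_on with
  | zero => simp [hv.v_one]
  | succ k ih => rw [zpow_add_one₀ hu0, hv.map_mul, ih, hu]; norm_cast
  | pred k ih =>
    rw [zpow_sub_one₀ hu0, hv.map_mul, ih, hv.v_inv_of_eq (t := 1) (by exact_mod_cast hu)]
    norm_cast

theorem exists_v_eq (hv : IsDiscVal v) (n : ℤ) : ∃ a, v a = n :=
  let ⟨u, hu⟩ := hv.exists_uniformizer
  ⟨u ^ n, hv.v_zpow hu n⟩

theorem eq_top_of_comp_eq_min {K : Type*} [Field K] {w : K → WithTop ℤ} (hv : IsDiscVal v)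
    (hw : IsDiscVal w) (φ : F →+* K) {c : WithTop ℤ}
    (h : ∀ a, a ≠ 0 → w (φ a) = min (v a) c) : c = ⊤ := by
  by_contra hc
  obtain ⟨c, rfl⟩ := WithTop.ne_top_iff_exists.mp hc
  obtain ⟨u, hu⟩ := hv.exists_uniformizer
  have hu0 : u ≠ 0 := by rintro rfl; simp [hv.v_zero] at hu
  set k : ℤ := c.natAbs + 1
  have hinv : φ (u ^ k) * φ (u ^ (-k)) = 1 := by
    rw [← _root_.map_mul, ← zpow_add₀ hu0, add_neg_cancel, zpow_zero, map_one]
  have hmul := hw.map_mul (φ (u ^ k)) (φ (u ^ (-k)))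
  rw [hinv, hw.v_one, h _ (zpow_ne_zero _ hu0), h _ (zpow_ne_zero _ hu0), hv.v_zpow hu,
    hv.v_zpow hu] at hmul
  have : (0 : ℤ) = min k c + min (-k) c := by exact_mod_cast hmul
  omega

end IsDiscVal

namespace AmpleStr

variable {E F : Type u} [Field E] [Field F] {vE : E → WithTop ℤ} {vF : F → WithTop ℤ}
  (st : AmpleStr E F vE vF)

theorem v_le_coeff {x : F} (hx : x ≠ 0) (i : ℤ) : vF x ≤ vE (st.coeff i x) :=
  (st.v_isLeast x hx).2 ⟨i, rfl⟩

theorem v_emb {a : E} (ha : a ≠ 0) : vF (st.emb a) = min (vE a) (vE 0) := by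
  have hx : st.emb a ≠ 0 := (map_ne_zero _).mpr ha
  obtain ⟨m, hm⟩ := (st.v_isLeast _ hx).1
  refine le_antisymm (le_min ?_ ?_) ?_
  · simpa [st.coeff_emb] using st.v_le_coeff hx 0
  · simpa [st.coeff_emb] using st.v_le_coeff hx 1
  · rw [← hm]
    by_cases hm0 : m = 0 <;> simp [st.coeff_emb, hm0]

end AmpleStr

namespace AmpleTower

variable {d : ℕ} {L 𝓚 : Type u} [Field L] [Field 𝓚]
  {vL : L → WithTop ℤ} {v𝓚 : 𝓚 → WithTop ℤ} (tw : AmpleTower d L vL 𝓚 v𝓚)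

theorem upHom_top (x : tw.F (d - 1)) : tw.upHom (d - 1) le_rfl x = x := by
  rw [upHom, dif_pos rfl]
  rfl

theorem upHom_of_lt {m : ℕ} (hm : m < d - 1) (x : tw.F m) :
    tw.upHom m hm.le x = tw.upHom (m + 1) hm ((tw.step m hm).emb x) := by
  rw [upHom, dif_neg hm.ne]
  rfl

theorem cc_upHom {m : ℕ} (hm : m ≤ d - 1) (x : tw.F m) :
    tw.cc (d - 1) le_rfl (tw.upHom m hm x) = tw.cc m hm x := by
  induction hm using Nat.decreasingInduction with
  | self => rw [upHom_top]
  | of_succ k hk ih => rw [upHom_of_lt tw hk, ih]; simp [cc, AmpleStr.coeff_emb]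

theorem constCoeff_embL (a : L) : tw.constCoeff (tw.embL a) = a := by
  simp [constCoeff, embL, cc_upHom, cc]

theorem exists_v_upHom_eq_min {m : ℕ} (hm : m ≤ d - 1) :
    ∃ c, ∀ x : tw.F m, x ≠ 0 → tw.v (d - 1) (tw.upHom m hm x) = min (tw.v m x) c := by
  induction hm using Nat.decreasingInduction with
  | self => exact ⟨⊤, fun x _ => by simp [upHom_top]⟩
  | of_succ k hk ih =>
    obtain ⟨c, hc⟩ := ih
    refine ⟨min (tw.v k 0) c, fun x hx => ?_⟩
    rw [upHom_of_lt tw hk, hc _ ((map_ne_zero _).mpr hx), (tw.step k hk).v_emb hx, min_assoc]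

theorem v_embL (hvL : IsDiscVal vL) (hv𝓚 : IsDiscVal v𝓚) (a : L) :
    v𝓚 (tw.embL a) = vL a := by
  obtain ⟨c, hc⟩ := tw.exists_v_upHom_eq_min (Nat.zero_le _)
  have hmin : ∀ a, a ≠ 0 → v𝓚 (tw.embL a) = min (vL a) c := fun a ha => by
    simp only [embL, RingHom.comp_apply, RingEquiv.toRingHom_eq_coe, RingEquiv.coe_toRingHom,
      tw.v_top, hc _ ((map_ne_zero _).mpr ha), tw.v_base]
  rcases eq_or_ne a 0 with rfl | ha
  · rw [map_zero, hvL.v_zero, hv𝓚.v_zero]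
  · rw [hmin a ha, hvL.eq_top_of_comp_eq_min hv𝓚 tw.embL hmin, min_top_right]

theorem cc_zero : ∀ j (h : j ≤ d - 1), tw.cc j h 0 = 0
  | 0, _ => map_zero _
  | j + 1, h => by simp [cc, cc_zero j]

theorem v_le_cc (hvL : IsDiscVal vL) :
    ∀ j (h : j ≤ d - 1) (x : tw.F j), tw.v j x ≤ vL (tw.cc j h x)
  | 0, _, x => by simpa [cc] using (tw.v_base (tw.baseEquiv.symm x)).le
  | j + 1, h, x => by
    rcases eq_or_ne x 0 with rfl | hx
    · simp [cc_zero, hvL.v_zero]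
    · exact ((tw.step j h).v_le_coeff hx 0).trans (v_le_cc hvL j _ _)

theorem v_le_constCoeff (hvL : IsDiscVal vL) (z : 𝓚) : v𝓚 z ≤ vL (tw.constCoeff z) := by
  simpa [constCoeff] using (tw.v_top (tw.topEquiv.symm z)).le.trans (tw.v_le_cc hvL _ le_rfl _)

end AmpleTower

section TraceDual

variable {K L : Type*} [Field K] [Field L] {w : K → WithTop ℤ} {v : L → WithTop ℤ}

theorem dual_setOf_le_eq (hw : IsDiscVal w) (hv : IsDiscVal v) (c : K → L) (ι : L →+* K)
    (hcι : ∀ a, c (ι a) = a) (hwι : ∀ a, w (ι a) = v a) (hwc : ∀ z, w z ≤ v (c z))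
    (P : L → Prop) (δ : ℤ)
    (hP : ∀ a, (∀ b, 0 ≤ v b → P (a * b)) ↔ (-δ : WithTop ℤ) ≤ v a)
    (n : ℤ) :
    {x | ∀ y, (n : WithTop ℤ) ≤ w y → P (c (x * y))} =
      {x | ((-δ - n : ℤ) : WithTop ℤ) ≤ w x} := by
  ext x
  constructor
  · intro hx
    rcases eq_or_ne x 0 with rfl | hx0
    · simp [hw.v_zero]
    obtain ⟨t, ht⟩ := hw.exists_eq_coe hx0
    obtain ⟨a, ha⟩ := hv.exists_v_eq (t + n)
    have hδa : (-δ : WithTop ℤ) ≤ v a := (hP a).mp fun b hb => by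
      have hy : (n : WithTop ℤ) ≤ w (x⁻¹ * ι (a * b)) := by
        rw [hw.map_mul, hw.v_inv_of_eq ht, hwι, hv.map_mul, ha, ← add_assoc, ← WithTop.coe_add,
          neg_add_cancel_left]
        exact le_add_of_nonneg_right hb
      have := hx _ hy
      rwa [mul_inv_cancel_left₀ hx0, hcι] at this
    rw [ha] at hδa
    have : -δ ≤ t + n := by exact_mod_cast hδa
    show ((-δ - n : ℤ) : WithTop ℤ) ≤ w x
    rw [ht]
    exact_mod_cast (by omega : -δ - n ≤ t)
  · intro hx y hy
    have hδ : (-δ : WithTop ℤ) ≤ v (c (x * y)) := calc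
      (-δ : WithTop ℤ) = ((-δ - n : ℤ) : WithTop ℤ) + n := by norm_cast; ring_nf
      _ ≤ w x + w y := add_le_add hx hy
      _ = w (x * y) := (hw.map_mul x y).symm
      _ ≤ v (c (x * y)) := hwc _
    simpa using (hP _).mpr hδ 1 hv.v_one.ge

end TraceDual

theorem R1_description_general
    (p : ℕ) (d : ℕ)
    (S : Type) [Field S] (vS : S → WithTop ℤ) (hvS : IsDiscVal vS)
    (L : Type) [Field L] [Algebra S L]
    (vL : L → WithTop ℤ) (hvL : IsDiscVal vL)
    -- `𝓛 = L{{T_1}}…{{T_{d−1}}}`: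
    (𝓛 : Type) [Field 𝓛] (v𝓛 : 𝓛 → WithTop ℤ) (hv𝓛 : IsDiscVal v𝓛)
    (tw : AmpleTower d L vL 𝓛 v𝓛)
    -- `v_L(p)`:
    (eL : ℕ)
    -- `v_L(D(L/S))`, characterized by trace duality (the inverse different is the dual of
    -- `O_L` with respect to the trace pairing):
    (dLS : ℤ)
    (hdLS : ∀ x : L,
      (∀ y : L, 0 ≤ vL y → Algebra.trace S L (x * y) ∈ hvS.subring) ↔
      (-dLS : WithTop ℤ) ≤ vL x) :
    {x : 𝓛 | ∀ y : 𝓛,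
        (((eL : ℤ) / ((p : ℤ) - 1) + 1 : ℤ) : WithTop ℤ) ≤ v𝓛 y →
        Algebra.trace S L (tw.constCoeff (x * y)) ∈ hvS.subring}
      = {x : 𝓛 | ((-dLS - (eL : ℤ) / ((p : ℤ) - 1) - 1 : ℤ) : WithTop ℤ) ≤ v𝓛 x} := by
  rw [dual_setOf_le_eq hv𝓛 hvL tw.constCoeff tw.embL tw.constCoeff_embL (tw.v_embL hvL hv𝓛)
    (tw.v_le_constCoeff hvL) (fun z => Algebra.trace S L z ∈ hvS.subring) dLS hdLS, sub_sub]

/-- Let `𝓛 = L{{T_1}}…{{T_{d−1}}}` with `L/S` a finite extension of local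
fields (`S` a finite extension of `ℚ_p`, `p > 2`, with ring of integers `C`).  Then
`R_{𝓛,1} = { x ∈ 𝓛 : v_𝓛(x) ≥ −v_L(D(L/S)) − ⌊v_L(p)/(p−1)⌋ − 1 }`,
where `R_{𝓛,1} = { x : 𝕋_{𝓛/S}(x · μ_{𝓛,1}) ⊆ C }` is the dual of
`μ_{𝓛,1} = { y : v_𝓛(y) ≥ ⌊v_𝓛(p)/(p−1)⌋ + 1 }` under the generalized trace
`𝕋_{𝓛/S} = Tr_{L/S} ∘ c_{𝓛/L}`, and `D(L/S)` is the different of `L/S` (its valuation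
`dLS = v_L(D(L/S))` being characterized by trace duality). -/
theorem R1_description
    (p : ℕ) (hp : p.Prime) (hp2 : 2 < p) (d : ℕ) (hd : 1 ≤ d)
    (S : Type) [Field S] (vS : S → WithTop ℤ) (hvS : IsDiscVal vS)
    (L : Type) [Field L] [Algebra S L] [FiniteDimensional S L]
    (vL : L → WithTop ℤ) (hvL : IsDiscVal vL)
    (eSL : ℕ) (heSL : 0 < eSL) (hcompat : ∀ x : S, vL (algebraMap S L x) = eSL • vS x)
    -- `𝓛 = L{{T_1}}…{{T_{d−1}}}`:
    (𝓛 : Type) [Field 𝓛] (v𝓛 : 𝓛 → WithTop ℤ) (hv𝓛 : IsDiscVal v𝓛)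
    (tw : AmpleTower d L vL 𝓛 v𝓛)
    -- `v_L(p)`:
    (eL : ℕ) (heL : vL (p : L) = (eL : ℤ))
    -- `v_L(D(L/S))`, characterized by trace duality (the inverse different is the dual of
    -- `O_L` with respect to the trace pairing):
    (dLS : ℤ)
    (hdLS : ∀ x : L,
      (∀ y : L, 0 ≤ vL y → Algebra.trace S L (x * y) ∈ hvS.subring) ↔
      (-dLS : WithTop ℤ) ≤ vL x) :
    {x : 𝓛 | ∀ y : 𝓛,
        (((eL : ℤ) / ((p : ℤ) - 1) + 1 : ℤ) : WithTop ℤ) ≤ v𝓛 y →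
        Algebra.trace S L (tw.constCoeff (x * y)) ∈ hvS.subring}
      = {x : 𝓛 | ((-dLS - (eL : ℤ) / ((p : ℤ) - 1) - 1 : ℤ) : WithTop ℤ) ≤ v𝓛 x} :=
  R1_description_general p d S vS hvS L vL hvL 𝓛 v𝓛 hv𝓛 tw eL dLS hdLS
end

section
/- Let 𝓛 be a finite field extension of a standard d-dimensional local field, with system of local uniformizers T_1,…,T_{d−1}, π_𝓛, let K ⊆ 𝓛 be a finite extension of ℚ_p with O_K ⊆ O_𝓛, let F be a formal group law over O_K, and fix n ≥ 1. Set J_n = { ī = (i_1,…,i_{d−1}) : 0 ≤ i_1,…,i_{d−1} < p^n }. Then every y in the maximal ideal μ_𝓛 can be written as a convergent infinite formal-group sum y = ⊕_{k=1}^∞ y_k, where y_k = ⊕_{ī ∈ J_n} γ_{ī,k}^{p^n} · T_1^{i_1}⋯T_{d−1}^{i_{d−1}} · π_𝓛^k for suitable elements γ_{ī,k} ∈ O_𝓛; here ⊕ denotes the group operation x ⊕_F y = F(x,y), and convergence means that the partial sums satisfy y ⊖_F (y_1 ⊕ ⋯ ⊕ y_m) ≡ 0 (mod π_𝓛^{m+1})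 for every m ≥ 1. -/
open scoped Classical

/-- Substitution of the family `g` (of power series with zero constant term) into the
multivariable power series `F`. -/
noncomputable def msubst {σ τ R : Type*} [Fintype σ] [CommRing R]
    (g : σ → MvPowerSeries τ R) (F : MvPowerSeries σ R) : MvPowerSeries τ R :=
  fun m =>
    ∑ k ∈ Finset.Iic (Finsupp.equivFunOnFinite.symm
        (fun _ : σ => m.sum fun _ v => v)),
      MvPowerSeries.coeff k F * MvPowerSeries.coeff m (∏ i : σ, g i ^ k i)

/-- A (one-dimensional, commutative) formal group law over `R`. -/
structure IsFormalGroupLaw {R : Type*} [CommRing R] (F : MvPowerSeries (Fin 2) R) : Prop where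
  coeff_zero : MvPowerSeries.coeff 0 F = 0
  coeff_X : MvPowerSeries.coeff (Finsupp.single 0 1) F = 1
  coeff_Y : MvPowerSeries.coeff (Finsupp.single 1 1) F = 1
  comm : ∀ e : Fin 2 →₀ ℕ,
    MvPowerSeries.coeff e F = MvPowerSeries.coeff (e.equivMapDomain (Equiv.swap 0 1)) F
  assoc : msubst ![msubst ![MvPowerSeries.X 0, MvPowerSeries.X 1] F, MvPowerSeries.X 2] F
      = msubst ![MvPowerSeries.X 0, msubst ![MvPowerSeries.X 1, MvPowerSeries.X 2] F] F
      (R := R) (τ := Fin 3)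

/-- `z = F(x, y)`: two-variable evaluation of a multivariable power series via truncations,
for points of the maximal ideal (`v ≥ 1`). -/
def MvEval2 {𝓛 : Type*} [Field 𝓛] (v : 𝓛 → WithTop ℤ) (F : MvPowerSeries (Fin 2) 𝓛)
    (x y z : 𝓛) : Prop :=
  ∀ N : ℕ, (N : WithTop ℤ) ≤
    v (z - MvPolynomial.eval ![x, y]
      (MvPowerSeries.trunc 𝓛 (Finsupp.equivFunOnFinite.symm fun _ => N) F))

/-- Iterated formal-group sum `a_1 ⊕ a_2 ⊕ ⋯ ⊕ a_r` of a list of terms (`⊕ = fadd`). -/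
noncomputable def finFold {𝓛 α : Type*} [Field 𝓛] (fadd : 𝓛 → 𝓛 → 𝓛)
    (s : List α) (f : α → 𝓛) : 𝓛 :=
  (s.map f).foldr fadd 0

section LaurentTower
/-!  The iterated Laurent series tower `E_0 = 𝔽`, `E_{j+1} = E_j((T_{j+1}))`, presented as a
family of fields `E j` with isomorphisms `E (j+1) ≃+* LaurentSeries (E j)`. -/

variable (E : ℕ → Type) [∀ j, Field (E j)]
variable (estep : ∀ j, E (j + 1) ≃+* LaurentSeries (E j))

/-- The constant-coefficient embedding `E_m → E_{m+1}`. -/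
noncomputable def stepEmb (m : ℕ) : E m →+* E (m + 1) :=
  ((estep m).symm : LaurentSeries (E m) →+* E (m + 1)).comp
    (HahnSeries.C : E m →+* LaurentSeries (E m))

/-- The iterated constant-coefficient embedding `E_m → E_{m+j}`. -/
noncomputable def upEmb (m : ℕ) : ∀ j : ℕ, E m →+* E (m + j)
  | 0 => RingHom.id _
  | j + 1 => (stepEmb E estep (m + j)).comp (upEmb m j)

/-- The variable `T_{j+1}` of the `(j+1)`-st layer, viewed in `E_D` (for `j < D`). -/
noncomputable def towerVar (D j : ℕ) (_h : j < D) : E D :=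
  cast (congrArg E (by omega : (j + 1) + (D - (j + 1)) = D))
    (upEmb E estep (j + 1) (D - (j + 1))
      ((estep j).symm (HahnSeries.single (1 : ℤ) (1 : E j))))

end LaurentTower

/-!
Modulo `μ_𝓛`, elements of `O_𝓛` live in the residue field, an iterated Laurent series field over
a finite field of characteristic `p`. There every element is a sum `∑_{ī ∈ J_n} a_ī^{p^n} T^ī`:
finite fields are perfect, and the `p^n`-th power of a Laurent series only raises its coefficients
to the `p^n`-th power and moves them to exponents divisible by `p^n`, so sorting exponents by their
residue mod `p^n` reduces each layer of the tower to the one below. Lifting, every element of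
`μ^k` is congruent to some `∑ γ_ī^{p^n} T^ī π^k` modulo `μ^{k+1}`.

Since `F` has integral coefficients and `F ≡ X + Y` modulo degree 2, changing the arguments of `⊕`
by elements of `μ^N` changes its value by their sum modulo `μ^{N+1}`; in particular `⊕` agrees
with `+` modulo `μ^{k+1}` on `μ^k`. Hence the blocks can be chosen greedily: `y_{m+1}` is the
level `m + 1` expansion of `y - (y_1 ⊕ ⋯ ⊕ y_m)`.
-/

namespace IsDiscVal

variable {𝓛 : Type*} [Field 𝓛] {v : 𝓛 → WithTop ℤ}

noncomputable def toAddValuation (hv : IsDiscVal v) : AddValuation 𝓛 (WithTop ℤ) :=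
  AddValuation.of v hv.v_zero hv.v_one hv.min_le_add hv.map_mul

@[simp]
theorem toAddValuation_apply (hv : IsDiscVal v) (x : 𝓛) : hv.toAddValuation x = v x := rfl

theorem val_pow_of_val_eq_one (hv : IsDiscVal v) {π : 𝓛} (hπ : v π = 1) (k : ℕ) :
    v (π ^ k) = k := by
  have := hv.toAddValuation.map_pow π k
  rw [hv.toAddValuation_apply, hv.toAddValuation_apply, hπ] at this
  simpa using this

end IsDiscVal

theorem exists_seq_forall_of_step {α : Type*} (P : ℕ → (ℕ → α) → Prop)
    (hlocal : ∀ m g g', (∀ k ≤ m, g k = g' k) → P m g → P m g') (h0 : ∃ g, P 0 g)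
    (hstep : ∀ m g, P m g → ∃ a, P (m + 1) (Function.update g (m + 1) a)) :
    ∃ g, ∀ m, P m g := by
  let s : (m : ℕ) → {g // P m g} := fun m =>
    Nat.rec ⟨h0.choose, h0.choose_spec⟩ (fun m g => ⟨_, (hstep m g.1 g.2).choose_spec⟩) m
  have hagree : ∀ m, ∀ k ≤ m, (s m).1 k = (s k).1 k := by
    intro m
    induction m with
    | zero => intro k hk; rw [Nat.le_zero.mp hk]
    | succ m ih =>
      intro k hk
      rcases Nat.lt_or_eq_of_le hk with hk | rfl
      · exact (Function.update_of_ne (by omega) _ _).trans (ih k (by omega))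
      · rfl
  exact ⟨fun k => (s k).1 k, fun m => hlocal m _ _ (hagree m) (s m).2⟩

theorem List.mem_range_map_add_one {k m : ℕ} : k ∈ (List.range m).map (· + 1) ↔ 1 ≤ k ∧ k ≤ m := by
  simp only [List.mem_map, List.mem_range]
  constructor
  · rintro ⟨j, hj, rfl⟩; omega
  · rintro ⟨h1, h2⟩; exact ⟨k - 1, by omega, by omega⟩

theorem MvPolynomial.eval_fin_two_eq_sum {R : Type*} [CommRing R] (P : MvPolynomial (Fin 2) R)
    (a b : R) :
    MvPolynomial.eval ![a, b] P = ∑ d ∈ P.support, P.coeff d * (a ^ d 0 * b ^ d 1) := by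
  simp [MvPolynomial.eval_eq', Fin.prod_univ_two]

theorem Finsupp.fin_two_eq_zero_or_two_le (d : Fin 2 →₀ ℕ) (hX : d ≠ Finsupp.single 0 1)
    (hY : d ≠ Finsupp.single 1 1) : d = 0 ∨ 2 ≤ d 0 + d 1 := by
  have hd : d = Finsupp.single 0 (d 0) + Finsupp.single 1 (d 1) := by
    ext i; fin_cases i <;> simp
  by_contra! h
  rcases (by omega : d 0 = 0 ∧ d 1 = 0 ∨ d 0 = 1 ∧ d 1 = 0 ∨ d 0 = 0 ∧ d 1 = 1) with
    ⟨h0, h1⟩ | ⟨h0, h1⟩ | ⟨h0, h1⟩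
  · exact h.1 (by rw [hd, h0, h1]; simp)
  · exact hX (by rw [hd, h0, h1]; simp)
  · exact hY (by rw [hd, h0, h1]; simp)

theorem Finsupp.single_one_lt_const {σ : Type*} [Finite σ] [Nontrivial σ] (i : σ) (N : ℕ) :
    Finsupp.single i 1 < Finsupp.equivFunOnFinite.symm (fun _ : σ => N + 1) := by
  refine lt_of_le_of_ne (fun j => ?_) fun h => ?_
  · by_cases hij : i = j <;> simp [hij]
  · obtain ⟨j, hj⟩ := exists_ne i
    simpa [Finsupp.single_apply, hj.symm] using DFunLike.congr_fun h j

namespace AddValuation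

variable {𝓛 : Type*} [Field 𝓛] (w : AddValuation 𝓛 (WithTop ℤ))

theorem eq_zero_of_forall_natCast_le {x : 𝓛} (h : ∀ N : ℕ, (N : WithTop ℤ) ≤ w x) : x = 0 := by
  rw [← w.top_iff]
  by_contra hx
  obtain ⟨k, hk⟩ := WithTop.ne_top_iff_exists.mp hx
  have hle := h (k.toNat + 1)
  rw [← hk] at hle
  have : ((k.toNat + 1 : ℕ) : ℤ) ≤ k := by exact_mod_cast hle
  omega

theorem natCast_le_pow {x : 𝓛} (hx : 1 ≤ w x) (k : ℕ) : (k : WithTop ℤ) ≤ w (x ^ k) := by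
  simpa [w.map_pow] using nsmul_le_nsmul_right hx k

variable {w}

theorem natCast_add_le_pow_sub_pow {x x' : 𝓛} (hx : 1 ≤ w x) (hx' : 1 ≤ w x') {N : ℕ}
    (h : (N : WithTop ℤ) ≤ w (x' - x)) (a : ℕ) :
    ((N + a : ℕ) : WithTop ℤ) ≤ w (x' ^ (a + 1) - x ^ (a + 1)) := by
  rw [← geom_sum₂_mul, w.map_mul, Nat.cast_add, add_comm]
  refine add_le_add (w.map_le_sum fun i hi => ?_) h
  have hi : i ≤ a := Nat.lt_succ_iff.mp (Finset.mem_range.mp hi)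
  rw [w.map_mul, show a + 1 - 1 - i = a - i by omega, ← Nat.add_sub_cancel' hi, Nat.cast_add,
    Nat.add_sub_cancel_left]
  exact add_le_add (w.natCast_le_pow hx' i) (w.natCast_le_pow hx _)

theorem succ_le_pow_sub_pow_mul {x x' z : 𝓛} (hx : 1 ≤ w x) (hx' : 1 ≤ w x') (hz : 1 ≤ w z)
    {N : ℕ} (h : (N : WithTop ℤ) ≤ w (x' - x)) {a b : ℕ} (hab : 2 ≤ a + b) :
    ((N + 1 : ℕ) : WithTop ℤ) ≤ w ((x' ^ a - x ^ a) * z ^ b) := by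
  obtain _ | a := a
  · simp
  · rw [w.map_mul]
    refine le_trans ?_ (add_le_add (natCast_add_le_pow_sub_pow hx hx' h a) (w.natCast_le_pow hz b))
    rw [← Nat.cast_add]
    exact_mod_cast (by omega : N + 1 ≤ N + a + b)

theorem succ_le_monomial_sub {x y x' y' : 𝓛} (hx : 1 ≤ w x) (hy : 1 ≤ w y) (hx' : 1 ≤ w x')
    (hy' : 1 ≤ w y') {N : ℕ} (hdx : (N : WithTop ℤ) ≤ w (x' - x))
    (hdy : (N : WithTop ℤ) ≤ w (y' - y)) {a b : ℕ} (hab : 2 ≤ a + b) :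
    ((N + 1 : ℕ) : WithTop ℤ) ≤ w (x' ^ a * y' ^ b - x ^ a * y ^ b) := by
  rw [show x' ^ a * y' ^ b - x ^ a * y ^ b
      = (x' ^ a - x ^ a) * y' ^ b + (y' ^ b - y ^ b) * x ^ a by ring]
  exact w.map_le_add (succ_le_pow_sub_pow_mul hx hx' hy' hdx hab)
    (succ_le_pow_sub_pow_mul hy hy' hx hdy (by omega))

theorem succ_le_eval_sub_eval {P : MvPolynomial (Fin 2) 𝓛} (hP : ∀ d, 0 ≤ w (P.coeff d))
    (hX : P.coeff (Finsupp.single 0 1) = 1) (hY : P.coeff (Finsupp.single 1 1) = 1)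
    {N : ℕ} {x y x' y' : 𝓛} (hx : 1 ≤ w x) (hy : 1 ≤ w y) (hx' : 1 ≤ w x') (hy' : 1 ≤ w y')
    (hdx : (N : WithTop ℤ) ≤ w (x' - x)) (hdy : (N : WithTop ℤ) ≤ w (y' - y)) :
    ((N + 1 : ℕ) : WithTop ℤ) ≤
      w (MvPolynomial.eval ![x', y'] P - MvPolynomial.eval ![x, y] P - (x' - x) - (y' - y)) := by
  have hXmem : Finsupp.single 0 1 ∈ P.support := by simp [hX]
  have hYmem : Finsupp.single 1 1 ∈ P.support.erase (Finsupp.single 0 1) := by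
    simp [hY, Finsupp.single_left_inj]
  rw [MvPolynomial.eval_fin_two_eq_sum, MvPolynomial.eval_fin_two_eq_sum, ← Finset.sum_sub_distrib,
    ← Finset.add_sum_erase _ _ hXmem, ← Finset.add_sum_erase _ _ hYmem]
  simp_rw [← mul_sub]
  -- the two linear monomials contribute exactly `x' - x` and `y' - y`
  simp only [hX, hY, Finsupp.single_eq_same, Finsupp.single_eq_of_ne, ne_eq, one_ne_zero,
    zero_ne_one, not_false_eq_true, pow_one, pow_zero, mul_one, one_mul, add_sub_cancel_left]
  refine w.map_le_sum fun d hd => ?_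
  simp only [Finset.mem_erase] at hd
  rcases Finsupp.fin_two_eq_zero_or_two_le d hd.2.1 hd.1 with rfl | hdeg
  · simp
  · rw [w.map_mul]
    simpa using add_le_add (hP d) (succ_le_monomial_sub hx hy hx' hy' hdx hdy hdeg)

end AddValuation

section FormalSum

variable {𝓛 : Type*} [Field 𝓛]

structure IsFormalSum (w : AddValuation 𝓛 (WithTop ℤ)) (F : MvPowerSeries (Fin 2) 𝓛)
    (fadd : 𝓛 → 𝓛 → 𝓛) : Prop where
  coeff_nonneg : ∀ e, 0 ≤ w (MvPowerSeries.coeff e F)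
  coeff_zero : MvPowerSeries.coeff 0 F = 0
  coeff_X : MvPowerSeries.coeff (Finsupp.single 0 1) F = 1
  coeff_Y : MvPowerSeries.coeff (Finsupp.single 1 1) F = 1
  eval : ∀ x y, 1 ≤ w x → 1 ≤ w y → MvEval2 w F x y (fadd x y)

namespace IsFormalSum

variable {w : AddValuation 𝓛 (WithTop ℤ)} {F : MvPowerSeries (Fin 2) 𝓛} {fadd : 𝓛 → 𝓛 → 𝓛}
  (h : IsFormalSum w F fadd)
include h

theorem le_val_fadd_sub_fadd (N : ℕ) {x y x' y' : 𝓛} (hx : 1 ≤ w x) (hy : 1 ≤ w y)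
    (hx' : 1 ≤ w x') (hy' : 1 ≤ w y') (hdx : (N : WithTop ℤ) ≤ w (x' - x))
    (hdy : (N : WithTop ℤ) ≤ w (y' - y)) :
    ((N + 1 : ℕ) : WithTop ℤ) ≤ w (fadd x' y' - fadd x y - (x' - x) - (y' - y)) := by
  set P := MvPowerSeries.trunc 𝓛 (Finsupp.equivFunOnFinite.symm fun _ => N + 1) F
  have hP (d : Fin 2 →₀ ℕ) : 0 ≤ w (P.coeff d) := by
    rw [MvPowerSeries.coeff_trunc]
    split_ifs
    · exact h.coeff_nonneg d
    · simp
  have hlin (i : Fin 2) :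
      P.coeff (Finsupp.single i 1) = MvPowerSeries.coeff (Finsupp.single i 1) F := by
    rw [MvPowerSeries.coeff_trunc, if_pos (Finsupp.single_one_lt_const i N)]
  rw [show fadd x' y' - fadd x y - (x' - x) - (y' - y)
      = (fadd x' y' - MvPolynomial.eval ![x', y'] P) - (fadd x y - MvPolynomial.eval ![x, y] P)
        + (MvPolynomial.eval ![x', y'] P - MvPolynomial.eval ![x, y] P - (x' - x) - (y' - y))
      by ring]
  exact w.map_le_add (w.map_le_sub (h.eval x' y' hx' hy' (N + 1)) (h.eval x y hx hy (N + 1)))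
    (w.succ_le_eval_sub_eval hP ((hlin 0).trans h.coeff_X) ((hlin 1).trans h.coeff_Y)
      hx hy hx' hy' hdx hdy)

theorem fadd_zero_zero : fadd 0 0 = 0 := by
  refine w.eq_zero_of_forall_natCast_le fun N => ?_
  have hzero : (![0, 0] : Fin 2 → 𝓛) = 0 := by
    ext i; fin_cases i <;> rfl
  simpa [hzero, MvPolynomial.eval_zero, MvPolynomial.constantCoeff_eq, MvPowerSeries.coeff_trunc,
    h.coeff_zero] using h.eval 0 0 (by simp) (by simp) N

theorem le_val_fadd_sub_add {M : ℕ} (hM : 1 ≤ M) {a b : 𝓛} (ha : (M : WithTop ℤ) ≤ w a)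
    (hb : (M : WithTop ℤ) ≤ w b) : ((M + 1 : ℕ) : WithTop ℤ) ≤ w (fadd a b - a - b) := by
  have hM : (1 : WithTop ℤ) ≤ M := by exact_mod_cast hM
  simpa [h.fadd_zero_zero] using h.le_val_fadd_sub_fadd M (x := 0) (y := 0) (by simp) (by simp)
    (hM.trans ha) (hM.trans hb) (by simpa using ha) (by simpa using hb)

theorem le_val_fadd {M : ℕ} (hM : 1 ≤ M) {a b : 𝓛} (ha : (M : WithTop ℤ) ≤ w a)
    (hb : (M : WithTop ℤ) ≤ w b) : (M : WithTop ℤ) ≤ w (fadd a b) := by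
  rw [show fadd a b = (fadd a b - a - b) + a + b by ring]
  refine w.map_le_add (w.map_le_add (le_trans ?_ (h.le_val_fadd_sub_add hM ha hb)) ha) hb
  exact_mod_cast M.le_succ

theorem le_val_foldr {M : ℕ} (hM : 1 ≤ M) {l : List 𝓛} (hl : ∀ a ∈ l, (M : WithTop ℤ) ≤ w a)
    {s : 𝓛} (hs : (M : WithTop ℤ) ≤ w s) : (M : WithTop ℤ) ≤ w (l.foldr fadd s) := by
  induction l with
  | nil => exact hs
  | cons a l ih =>
    exact h.le_val_fadd hM (hl a List.mem_cons_self)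
      (ih fun b hb => hl b (List.mem_cons_of_mem a hb))

theorem one_le_val_foldr {l : List 𝓛} (hl : ∀ a ∈ l, 1 ≤ w a) {s : 𝓛} (hs : 1 ≤ w s) :
    1 ≤ w (l.foldr fadd s) := by
  simpa using h.le_val_foldr le_rfl (M := 1) (by simpa using hl) (by simpa using hs)

theorem le_val_foldr_sub_sum {M : ℕ} (hM : 1 ≤ M) {l : List 𝓛}
    (hl : ∀ a ∈ l, (M : WithTop ℤ) ≤ w a) :
    ((M + 1 : ℕ) : WithTop ℤ) ≤ w (l.foldr fadd 0 - l.sum) := by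
  induction l with
  | nil => simp
  | cons a l ih =>
    have hl' : ∀ b ∈ l, (M : WithTop ℤ) ≤ w b := fun b hb => hl b (List.mem_cons_of_mem a hb)
    rw [List.foldr_cons, List.sum_cons, show fadd a (l.foldr fadd 0) - (a + l.sum)
      = (fadd a (l.foldr fadd 0) - a - l.foldr fadd 0) + (l.foldr fadd 0 - l.sum) by ring]
    exact w.map_le_add (h.le_val_fadd_sub_add hM (hl a List.mem_cons_self)
      (h.le_val_foldr hM hl' (by simp))) (ih hl')

theorem le_val_foldr_sub_foldr (N : ℕ) {l : List 𝓛} (hl : ∀ a ∈ l, 1 ≤ w a) {s s' : 𝓛}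
    (hs : 1 ≤ w s) (hs' : 1 ≤ w s') (hd : (N : WithTop ℤ) ≤ w (s' - s)) :
    ((N + 1 : ℕ) : WithTop ℤ) ≤ w (l.foldr fadd s' - l.foldr fadd s - (s' - s)) := by
  induction l with
  | nil => simp
  | cons a l ih =>
    have hl' : ∀ b ∈ l, 1 ≤ w b := fun b hb => hl b (List.mem_cons_of_mem a hb)
    have ha := hl a List.mem_cons_self
    set t := l.foldr fadd s
    set t' := l.foldr fadd s'
    have htt' : (N : WithTop ℤ) ≤ w (t' - t) := by
      rw [show t' - t = (t' - t - (s' - s)) + (s' - s) by ring]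
      exact w.map_le_add (le_trans (by exact_mod_cast N.le_succ) (ih hl')) hd
    have hstep := h.le_val_fadd_sub_fadd N ha (h.one_le_val_foldr hl' hs) ha
      (h.one_le_val_foldr hl' hs') (by simp) htt'
    rw [List.foldr_cons, List.foldr_cons, show fadd a t' - fadd a t - (s' - s)
      = (fadd a t' - fadd a t - (a - a) - (t' - t)) + (t' - t - (s' - s)) by ring]
    exact w.map_le_add hstep (ih hl')

theorem le_val_foldr_append_singleton_sub {M : ℕ} (hM : 1 ≤ M) {l : List 𝓛}
    (hl : ∀ a ∈ l, 1 ≤ w a) {b : 𝓛} (hb : (M : WithTop ℤ) ≤ w b) :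
    ((M + 1 : ℕ) : WithTop ℤ) ≤ w ((l ++ [b]).foldr fadd 0 - l.foldr fadd 0 - b) := by
  have hM1 : (1 : WithTop ℤ) ≤ M := by exact_mod_cast hM
  have hb0 : (M : WithTop ℤ) ≤ w (fadd b 0) := h.le_val_fadd hM hb (by simp)
  have hseed := h.le_val_foldr_sub_foldr M hl (s := 0) (by simp) (hM1.trans hb0)
    (by simpa using hb0)
  rw [List.foldr_append, List.foldr_cons, List.foldr_nil, show l.foldr fadd (fadd b 0)
      - l.foldr fadd 0 - b = (l.foldr fadd (fadd b 0) - l.foldr fadd 0 - (fadd b 0 - 0))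
        + (fadd b 0 - b - 0) by ring]
  exact w.map_le_add hseed (h.le_val_fadd_sub_add hM hb (by simp))

theorem le_val_fadd_fneg {fneg : 𝓛 → 𝓛}
    (hfneg : ∀ x, 1 ≤ w x → 1 ≤ w (fneg x) ∧ fadd x (fneg x) = 0) {y s : 𝓛} (hy : 1 ≤ w y)
    {N : ℕ} (hN : 1 ≤ N) (hys : (N : WithTop ℤ) ≤ w (y - s)) :
    (N : WithTop ℤ) ≤ w (fadd y (fneg s)) := by
  have hs : 1 ≤ w s := by
    rw [show s = y - (y - s) by ring]
    exact w.map_le_sub hy (le_trans (by exact_mod_cast hN) hys)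
  obtain ⟨hns, hsum⟩ := hfneg s hs
  have hdiff := h.le_val_fadd_sub_fadd N hs hns hy hns hys (by simp)
  rw [hsum, sub_self, sub_zero, sub_zero] at hdiff
  rw [show fadd y (fneg s) = (fadd y (fneg s) - (y - s)) + (y - s) by ring]
  exact w.map_le_add (le_trans (by exact_mod_cast N.le_succ) hdiff) hys

theorem exists_expansion {α : Type*} (Y : ℕ → α → 𝓛)
    (hY : ∀ k : ℕ, 1 ≤ k → ∀ a, (k : WithTop ℤ) ≤ w (Y k a))
    (hdigit : ∀ k : ℕ, 1 ≤ k → ∀ δ, (k : WithTop ℤ) ≤ w δ →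
      ∃ a, ((k + 1 : ℕ) : WithTop ℤ) ≤ w (δ - Y k a))
    {y : 𝓛} (hy : 1 ≤ w y) :
    ∃ g : ℕ → α, ∀ m, ((m + 1 : ℕ) : WithTop ℤ) ≤
      w (y - finFold fadd ((List.range m).map (· + 1)) fun k => Y k (g k)) := by
  set S : ℕ → (ℕ → α) → 𝓛 := fun m g => finFold fadd ((List.range m).map (· + 1)) fun k => Y k (g k)
  have hS (m : ℕ) {g g' : ℕ → α} (hgg' : ∀ k ≤ m, g k = g' k) : S m g = S m g' := by
    simp only [S, finFold]
    congr 1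
    exact List.map_congr_left fun k hk => by rw [hgg' k (List.mem_range_map_add_one.mp hk).2]
  refine exists_seq_forall_of_step (fun m g => ((m + 1 : ℕ) : WithTop ℤ) ≤ w (y - S m g))
    (fun m g g' hgg' hP => hS m hgg' ▸ hP) ?_ fun m g hP => ?_
  · obtain ⟨a, -⟩ := hdigit 1 le_rfl y (by simpa using hy)
    exact ⟨fun _ => a, by simpa [S, finFold] using hy⟩
  · obtain ⟨a, ha⟩ := hdigit (m + 1) (by omega) (y - S m g) hP
    refine ⟨a, ?_⟩
    set g' := Function.update g (m + 1) a
    set L := ((List.range m).map (· + 1)).map fun k => Y k (g' k)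
    have hL : ∀ b ∈ L, 1 ≤ w b := by
      intro b hb
      obtain ⟨k, hk, rfl⟩ := List.mem_map.mp hb
      have hk := (List.mem_range_map_add_one.mp hk).1
      exact le_trans (by exact_mod_cast hk) (hY k hk (g' k))
    have hSm : S m g' = L.foldr fadd 0 := rfl
    have hSm' : S m g' = S m g := hS m fun k hk => Function.update_of_ne (by omega) _ _
    have hSsucc : S (m + 1) g' = (L ++ [Y (m + 1) a]).foldr fadd 0 := by
      simp [S, L, finFold, List.range_succ, g']
    -- only the new block changes, and modulo `μ^{m+2}` it adds itself to the partial sum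
    have hlast := h.le_val_foldr_append_singleton_sub (M := m + 1) (by omega) hL
      (hY (m + 1) (by omega) a)
    rw [← hSsucc, ← hSm, hSm'] at hlast
    rw [show y - S (m + 1) g' = (y - S m g - Y (m + 1) a) - (S (m + 1) g' - S m g - Y (m + 1) a)
      by ring]
    exact w.map_le_sub ha hlast

end IsFormalSum

end FormalSum

theorem PowerSeries.eq_sum_X_pow_mul_expand {R : Type*} [CommRing R] {q : ℕ} (hq : q ≠ 0)
    (g : PowerSeries R) :
    g = ∑ i : Fin q, PowerSeries.X ^ (i : ℕ) *
      PowerSeries.expand q hq (PowerSeries.mk fun s => PowerSeries.coeff (q * s + i) g) := by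
  ext k
  simp_rw [map_sum, PowerSeries.coeff_X_pow_mul', PowerSeries.coeff_expand, PowerSeries.coeff_mk]
  have hkq : k % q < q := Nat.mod_lt k (Nat.pos_of_ne_zero hq)
  rw [Finset.sum_eq_single ⟨k % q, hkq⟩]
  · simp only [Nat.mod_le, if_true, Nat.dvd_sub_mod]
    rw [Nat.mul_div_cancel' (Nat.dvd_sub_mod k), Nat.sub_add_cancel (Nat.mod_le k q)]
  · intro i _ hi
    split_ifs with hik hdvd
    · refine absurd (Fin.ext ?_) hi
      have := (Nat.modEq_iff_dvd' hik).mpr hdvd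
      rw [Nat.ModEq, Nat.mod_eq_of_lt i.isLt] at this
      exact this
    all_goals rfl
  · simp

def PowSpans {K ι : Type*} [CommRing K] [Fintype ι] (q : ℕ) (r : ι → K) : Prop :=
  ∀ z : K, ∃ a : ι → K, z = ∑ i, a i ^ q * r i

namespace PowSpans

variable {K L ι κ : Type*} [CommRing K] [CommRing L] [Fintype ι] [Fintype κ] {q : ℕ} {r : ι → K}

theorem map_ringEquiv (h : PowSpans q r) (e : K ≃+* L) : PowSpans q fun i => e (r i) := by
  intro z
  obtain ⟨a, ha⟩ := h (e.symm z)
  exact ⟨fun i => e (a i), by rw [← e.apply_symm_apply z, ha]; simp⟩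

theorem comp_equiv (h : PowSpans q r) (e : κ ≃ ι) : PowSpans q (r ∘ e) := by
  intro z
  obtain ⟨a, ha⟩ := h z
  exact ⟨a ∘ e, by rw [ha]; exact (e.sum_comp fun i => a i ^ q * r i).symm⟩

theorem one_of_perfectRing (p n : ℕ) [ExpChar K p] [PerfectRing K p] :
    PowSpans (p ^ n) fun _ : Unit => (1 : K) := fun z =>
  ⟨fun _ => (iterateFrobeniusEquiv K p n).symm z, by
    simp [← iterateFrobeniusEquiv_def]⟩

theorem powerSeries {p n : ℕ} [ExpChar K p] {r : ι → K} (h : PowSpans (p ^ n) r) :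
    PowSpans (p ^ n) fun x : Fin (p ^ n) × ι =>
      PowerSeries.C (r x.2) * PowerSeries.X ^ (x.1 : ℕ) := by
  have hq : p ^ n ≠ 0 := pow_ne_zero n (expChar_ne_zero K p)
  have hcoeff (g : PowerSeries K) : ∃ A : ι → PowerSeries K,
      g = ∑ i, PowerSeries.C (r i) * PowerSeries.map (iterateFrobenius K p n) (A i) := by
    choose a ha using fun s => h (PowerSeries.coeff s g)
    refine ⟨fun i => PowerSeries.mk fun s => a s i, ?_⟩
    ext s
    simp [PowerSeries.coeff_C_mul, iterateFrobenius_def, ha s, mul_comm]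
  intro g
  choose A hA using fun i : Fin (p ^ n) =>
    hcoeff (PowerSeries.mk fun s => PowerSeries.coeff (p ^ n * s + i) g)
  refine ⟨fun x => A x.1 x.2, ?_⟩
  have hfrob (B : PowerSeries K) :
      PowerSeries.expand (p ^ n) hq (PowerSeries.map (iterateFrobenius K p n) B) = B ^ p ^ n := by
    rw [← PowerSeries.map_expand]
    exact MvPowerSeries.map_iterateFrobenius_expand p (expChar_ne_zero K p) B n
  conv_lhs => rw [PowerSeries.eq_sum_X_pow_mul_expand hq g]
  simp_rw [hA, map_sum, map_mul, PowerSeries.expand_C, hfrob, Finset.mul_sum,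
    Fintype.sum_prod_type]
  exact Finset.sum_congr rfl fun i _ => Finset.sum_congr rfl fun j _ => by ring

theorem laurentSeries {q : ℕ} (hq : q ≠ 0) {r : ι → PowerSeries K} (h : PowSpans q r) :
    PowSpans q fun i => HahnSeries.ofPowerSeries ℤ K (r i) := by
  intro (f : LaurentSeries K)
  -- `f = T^o g` with `g` a power series, and `T^o = (T^(o / q))^q T^(o % q)`
  set o := f.order
  have hb : 0 ≤ o % q := Int.emod_nonneg o (by exact_mod_cast hq)
  obtain ⟨a, ha⟩ := h (PowerSeries.X ^ (o % q).toNat * f.powerSeriesPart)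
  refine ⟨fun i => HahnSeries.single (o / q) 1 * HahnSeries.ofPowerSeries ℤ K (a i), ?_⟩
  have hsingle : HahnSeries.single o (1 : K)
      = HahnSeries.single (o / q) 1 ^ q * HahnSeries.ofPowerSeries ℤ K
          (PowerSeries.X ^ (o % q).toNat) := by
    rw [HahnSeries.single_pow, HahnSeries.ofPowerSeries_X_pow, HahnSeries.single_mul_single,
      Int.toNat_of_nonneg hb, one_pow, mul_one, nsmul_eq_mul, Int.mul_ediv_add_emod]
  conv_lhs => rw [← LaurentSeries.single_order_mul_powerSeriesPart f, hsingle, mul_assoc,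
    ← map_mul, ha]
  simp_rw [map_sum, map_mul, map_pow, Finset.mul_sum, mul_pow]
  exact Finset.sum_congr rfl fun i _ => by ring

theorem exists_lift {A B ι : Type*} [CommRing A] [CommRing B] [Fintype ι] {q : ℕ}
    {r : ι → B} (h : PowSpans q r) (f : A →+* B) (hf : Function.Surjective f) {b : ι → A}
    (hb : ∀ i, f (b i) = r i) (x : A) : ∃ c : ι → A, f (x - ∑ i, c i ^ q * b i) = 0 := by
  obtain ⟨a, ha⟩ := h (f x)
  choose c hc using fun i => hf (a i)
  exact ⟨c, by simp [hc, hb, ← ha]⟩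

end PowSpans

section LaurentTower

variable (E : ℕ → Type) [∀ j, Field (E j)] (estep : ∀ j, E (j + 1) ≃+* LaurentSeries (E j))

theorem towerVar_eq_cast {D j k : ℕ} (hk : j + 1 + k = D) (h : j < D) :
    towerVar E estep D j h = cast (congrArg E hk)
      (upEmb E estep (j + 1) k ((estep j).symm (HahnSeries.single (1 : ℤ) (1 : E j)))) := by
  obtain rfl : D - (j + 1) = k := by omega
  rfl

theorem towerVar_succ_self (D : ℕ) :
    towerVar E estep (D + 1) D D.lt_succ_self
      = (estep D).symm (HahnSeries.single (1 : ℤ) (1 : E D)) :=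
  towerVar_eq_cast E estep (k := 0) rfl _

theorem towerVar_succ_of_lt {D j : ℕ} (h : j < D) :
    towerVar E estep (D + 1) j (Nat.lt_succ_of_lt h)
      = stepEmb E estep D (towerVar E estep D j h) := by
  obtain ⟨k, rfl⟩ : ∃ k, j + 1 + k = D := ⟨D - (j + 1), by omega⟩
  rw [towerVar_eq_cast E estep (k := k + 1) (by omega), towerVar_eq_cast E estep rfl]
  rfl

theorem symm_estep_C (m : ℕ) (c : E m) :
    (estep m).symm (HahnSeries.C c) = stepEmb E estep m c := rfl

theorem symm_estep_ofPowerSeries_X (m : ℕ) :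
    (estep m).symm (HahnSeries.ofPowerSeries ℤ (E m) PowerSeries.X)
      = towerVar E estep (m + 1) m m.lt_succ_self := by
  rw [towerVar_succ_self, HahnSeries.ofPowerSeries_X]

include estep in
theorem expChar_tower {𝔽 : Type} [Field 𝔽] (e0 : E 0 ≃+* 𝔽) (p : ℕ) [ExpChar 𝔽 p] :
    ∀ m, ExpChar (E m) p
  | 0 => expChar_of_injective_ringHom (f := (e0.symm : 𝔽 →+* E 0)) e0.symm.injective p
  | m + 1 =>
    have := expChar_tower e0 p m
    expChar_of_injective_ringHom (stepEmb E estep m).injective p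

theorem powSpans_towerVar {𝔽 : Type} [Field 𝔽] [Finite 𝔽] (e0 : E 0 ≃+* 𝔽) (p : ℕ) [ExpChar 𝔽 p]
    (n D : ℕ) :
    PowSpans (p ^ n) fun iv : Fin D → Fin (p ^ n) =>
      ∏ j : Fin D, towerVar E estep D j j.isLt ^ (iv j : ℕ) := by
  have := expChar_tower E estep e0 p
  induction D with
  | zero =>
    have := PerfectRing.ofFiniteOfIsReduced p 𝔽
    simpa [Function.comp_def] using ((PowSpans.one_of_perfectRing (K := 𝔽) p n).map_ringEquiv
      e0.symm).comp_equiv (Equiv.ofUnique (Fin 0 → Fin (p ^ n)) Unit)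
  | succ D ih =>
    convert ((ih.powerSeries.laurentSeries (pow_ne_zero n (expChar_ne_zero (E D) p))).map_ringEquiv
      (estep D).symm).comp_equiv (Fin.snocEquiv fun _ => Fin (p ^ n)).symm using 1
    funext iv
    simp only [Function.comp_apply, Fin.snocEquiv, Equiv.coe_fn_symm_mk, Fin.init, map_mul,
      map_pow, HahnSeries.ofPowerSeries_C, symm_estep_C, symm_estep_ofPowerSeries_X, map_prod,
      Fin.prod_univ_castSucc, Fin.val_castSucc, Fin.val_last, Fin.is_lt, towerVar_succ_of_lt]

end LaurentTower

namespace IsDiscVal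

variable {𝓛 : Type*} [Field 𝓛] {v : 𝓛 → WithTop ℤ}

theorem exists_digit (hv : IsDiscVal v) {π : 𝓛} (hπ : v π = 1) {ι : Type*} [Fintype ι] {q : ℕ}
    {b : ι → 𝓛}
    (happrox : ∀ u : hv.subring, ∃ c : ι → hv.subring, 1 ≤ v ((u : 𝓛) - ∑ i, (c i : 𝓛) ^ q * b i))
    (k : ℕ) {δ : 𝓛} (hδ : (k : WithTop ℤ) ≤ v δ) :
    ∃ c : ι → hv.subring, ((k + 1 : ℕ) : WithTop ℤ) ≤ v (δ - ∑ i, (c i : 𝓛) ^ q * b i * π ^ k) := by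
  have hπk := hv.val_pow_of_val_eq_one hπ k
  have hπ0 : π ^ k ≠ 0 := fun h0 => by simp [h0, hv.v_zero] at hπk
  set u := δ / π ^ k
  have hδu : δ = u * π ^ k := (div_mul_cancel₀ δ hπ0).symm
  have hu : 0 ≤ v u := by
    rw [hδu, hv.map_mul, hπk] at hδ
    exact WithTop.le_of_add_le_add_right (WithTop.natCast_ne_top k) (by simpa using hδ)
  obtain ⟨c, hc⟩ := happrox ⟨u, hu⟩
  refine ⟨c, ?_⟩
  rw [show δ - ∑ i, (c i : 𝓛) ^ q * b i * π ^ k = (u - ∑ i, (c i : 𝓛) ^ q * b i) * π ^ k by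
    rw [hδu, sub_mul, Finset.sum_mul], hv.map_mul, hπk, Nat.cast_succ, add_comm]
  exact add_le_add_left hc _

theorem exists_approx_towerVar (hv : IsDiscVal v) {E : ℕ → Type} [∀ j, Field (E j)]
    (estep : ∀ j, E (j + 1) ≃+* LaurentSeries (E j)) {𝔽 : Type} [Field 𝔽] [Finite 𝔽]
    (e0 : E 0 ≃+* 𝔽) (p : ℕ) [ExpChar 𝔽 p] (n D : ℕ) (res : hv.subring →+* E D)
    (hres_surj : Function.Surjective res) (hres_ker : ∀ x : hv.subring, res x = 0 → 1 ≤ v x)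
    (T : Fin D → hv.subring) (hT : ∀ j : Fin D, res (T j) = towerVar E estep D j j.isLt)
    (u : hv.subring) : ∃ c : (Fin D → Fin (p ^ n)) → hv.subring,
      1 ≤ v ((u : 𝓛) - ∑ iv, (c iv : 𝓛) ^ p ^ n * ∏ j, (T j : 𝓛) ^ (iv j : ℕ)) := by
  obtain ⟨c, hc⟩ := (powSpans_towerVar E estep e0 p n D).exists_lift res hres_surj
    (b := fun iv => ∏ j, T j ^ (iv j : ℕ)) (fun iv => by simp [hT]) u
  exact ⟨c, by simpa using hres_ker _ hc⟩

end IsDiscVal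

theorem IsFormalSum.exists_digit_expansion {𝓛 : Type*} [Field 𝓛] {v : 𝓛 → WithTop ℤ}
    {hv : IsDiscVal v} {F : MvPowerSeries (Fin 2) 𝓛} {fadd : 𝓛 → 𝓛 → 𝓛}
    (h : IsFormalSum hv.toAddValuation F fadd) {π : 𝓛} (hπ : v π = 1) {ι : Type*} [Fintype ι]
    {q : ℕ} {b : ι → 𝓛} (hb : ∀ i, 0 ≤ v (b i))
    (happrox : ∀ u : hv.subring, ∃ c : ι → hv.subring, 1 ≤ v ((u : 𝓛) - ∑ i, (c i : 𝓛) ^ q * b i))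
    {y : 𝓛} (hy : 1 ≤ v y) :
    ∃ γ : ℕ → ι → hv.subring, ∀ m, ((m + 1 : ℕ) : WithTop ℤ) ≤
      v (y - finFold fadd ((List.range m).map (· + 1)) fun k =>
        finFold fadd (Finset.univ : Finset ι).toList fun i => (γ k i : 𝓛) ^ q * b i * π ^ k) := by
  set term : ℕ → (ι → hv.subring) → ι → 𝓛 := fun k c i => (c i : 𝓛) ^ q * b i * π ^ k
  have hterm (k : ℕ) (c : ι → hv.subring) :
      ∀ a ∈ Finset.univ.toList.map (term k c), (k : WithTop ℤ) ≤ hv.toAddValuation a := by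
    simp only [List.mem_map]
    rintro _ ⟨i, -, rfl⟩
    have hc : 0 ≤ v ((c i : 𝓛) ^ q) := by exact_mod_cast (c i ^ q).2
    change (k : WithTop ℤ) ≤ v ((c i : 𝓛) ^ q * b i * π ^ k)
    rw [hv.map_mul, hv.map_mul, hv.val_pow_of_val_eq_one hπ]
    exact le_add_of_nonneg_left (add_nonneg hc (hb i))
  refine h.exists_expansion _ (fun k hk c => h.le_val_foldr hk (hterm k c) (by simp))
    (fun k hk δ hδ => ?_) hy
  obtain ⟨c, hc⟩ := hv.exists_digit hπ happrox k hδ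
  refine ⟨c, ?_⟩
  have hsum := h.le_val_foldr_sub_sum hk (hterm k c)
  rw [Finset.sum_map_toList] at hsum
  rw [← sub_sub_sub_cancel_right δ _ (∑ i, term k c i)]
  exact hv.toAddValuation.map_le_sub hc hsum

theorem formal_group_series_representation_general
    (p : ℕ) (hp : p.Prime) (d : ℕ)
    (𝓛 : Type*) [Field 𝓛]
    (v : 𝓛 → WithTop ℤ) (hv : IsDiscVal v)
    (π𝓛 : 𝓛) (hπ : v π𝓛 = 1)
    -- residue structure (𝓛 is a finite extension of a standard `d`-dimensional local field):
    (𝔽 : Type) [Field 𝔽] [Fintype 𝔽] [CharP 𝔽 p]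
    (E : ℕ → Type) [∀ j, Field (E j)] (estep : ∀ j, E (j + 1) ≃+* LaurentSeries (E j))
    (e0 : E 0 ≃+* 𝔽)
    (res : hv.subring →+* E (d - 1))
    (hres_surj : Function.Surjective res)
    (hres_ker : ∀ x : hv.subring, res x = 0 ↔ 1 ≤ v (x : 𝓛))
    (T : Fin (d - 1) → hv.subring)
    (hT : ∀ j : Fin (d - 1), res (T j) = towerVar E estep (d - 1) j j.isLt)
    -- the subfield `K ⊆ 𝓛` and the formal group law `F` over `O_K`:
    (K : Subfield 𝓛)
    (F : MvPowerSeries (Fin 2) 𝓛)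
    (hFK : ∀ e, MvPowerSeries.coeff e F ∈ K ∧ (0 : WithTop ℤ) ≤ v (MvPowerSeries.coeff e F))
    (hF : IsFormalGroupLaw F)
    -- the induced group operation `⊕` and negation `⊖` on the maximal ideal `μ_𝓛`:
    (fadd : 𝓛 → 𝓛 → 𝓛) (fneg : 𝓛 → 𝓛)
    (hfadd : ∀ x y : 𝓛, 1 ≤ v x → 1 ≤ v y →
      MvEval2 v F x y (fadd x y) ∧ 1 ≤ v (fadd x y))
    (hfneg : ∀ x : 𝓛, 1 ≤ v x → 1 ≤ v (fneg x) ∧ fadd x (fneg x) = 0)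
    (n : ℕ) :
    ∀ y : 𝓛, 1 ≤ v y →
      ∃ γ : ℕ → (Fin (d - 1) → Fin (p ^ n)) → hv.subring,
        ∀ m : ℕ, 1 ≤ m →
          ((m : ℤ) + 1 : WithTop ℤ) ≤
            v (fadd y (fneg (finFold fadd ((List.range m).map (· + 1)) (fun k =>
              finFold fadd (Finset.univ : Finset (Fin (d - 1) → Fin (p ^ n))).toList
                (fun iv => ((γ k iv : 𝓛)) ^ (p ^ n) *
                  (∏ j : Fin (d - 1), ((T j : 𝓛)) ^ ((iv j : ℕ))) * π𝓛 ^ k))))) := by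
  have : ExpChar 𝔽 p := ExpChar.prime hp
  have hFS : IsFormalSum hv.toAddValuation F fadd :=
    ⟨fun e => (hFK e).2, hF.coeff_zero, hF.coeff_X, hF.coeff_Y,
      fun x y hx hy => (hfadd x y hx hy).1⟩
  have hTpow (iv : Fin (d - 1) → Fin (p ^ n)) : 0 ≤ v (∏ j, (T j : 𝓛) ^ (iv j : ℕ)) := by
    exact_mod_cast (∏ j, T j ^ (iv j : ℕ)).2
  intro y hy
  obtain ⟨γ, hγ⟩ := hFS.exists_digit_expansion hπ hTpow (hv.exists_approx_towerVar estep e0 p n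
    (d - 1) res hres_surj (fun x => (hres_ker x).mp) T hT) hy
  refine ⟨γ, fun m _ => ?_⟩
  rw [show ((m : ℤ) + 1 : WithTop ℤ) = ((m + 1 : ℕ) : WithTop ℤ) by norm_cast]
  exact hFS.le_val_fadd_fneg hfneg hy (by omega) (hγ m)

/-- Let `𝓛` be a `d`-dimensional local field of mixed characteristic with
system of local uniformizers `T_1, …, T_{d−1}, π_𝓛`, let `K ⊆ 𝓛` with `O_K ⊆ O_𝓛`, let `F`
be a formal group law with coefficients in `O_K`, and fix `n ≥ 1`.  Write `x ⊕ y` for the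
formal group operation `F(x,y)` on the maximal ideal `μ_𝓛`, and `⊖` for the induced
subtraction.  Then every `y ∈ μ_𝓛` is a convergent infinite formal-group sum
`y = ⊕_{k=1}^∞ y_k` with `y_k = ⊕_{ī ∈ J_n} γ_{ī,k}^{p^n}·T_1^{i_1}⋯T_{d−1}^{i_{d−1}}·π_𝓛^k`,
`γ_{ī,k} ∈ O_𝓛`: the partial sums satisfy `y ⊖ (y_1 ⊕ ⋯ ⊕ y_m) ≡ 0 (mod π_𝓛^{m+1})`
for every `m ≥ 1`. -/
theorem formal_group_series_representation
    (p : ℕ) (hp : p.Prime) (d : ℕ) (hd : 1 ≤ d)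
    (𝓛 : Type*) [Field 𝓛] [CharZero 𝓛]
    (v : 𝓛 → WithTop ℤ) (hv : IsDiscVal v)
    (π𝓛 : 𝓛) (hπ : v π𝓛 = 1)
    -- residue structure (𝓛 is a finite extension of a standard `d`-dimensional local field):
    (𝔽 : Type) [Field 𝔽] [Fintype 𝔽] [CharP 𝔽 p]
    (E : ℕ → Type) [∀ j, Field (E j)] (estep : ∀ j, E (j + 1) ≃+* LaurentSeries (E j))
    (e0 : E 0 ≃+* 𝔽)
    (res : hv.subring →+* E (d - 1))
    (hres_surj : Function.Surjective res)
    (hres_ker : ∀ x : hv.subring, res x = 0 ↔ 1 ≤ v (x : 𝓛))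
    (T : Fin (d - 1) → hv.subring)
    (hT : ∀ j : Fin (d - 1), res (T j) = towerVar E estep (d - 1) j j.isLt)
    -- the subfield `K ⊆ 𝓛` and the formal group law `F` over `O_K`:
    (K : Subfield 𝓛)
    (F : MvPowerSeries (Fin 2) 𝓛)
    (hFK : ∀ e, MvPowerSeries.coeff e F ∈ K ∧ (0 : WithTop ℤ) ≤ v (MvPowerSeries.coeff e F))
    (hF : IsFormalGroupLaw F)
    -- the induced group operation `⊕` and negation `⊖` on the maximal ideal `μ_𝓛`:
    (fadd : 𝓛 → 𝓛 → 𝓛) (fneg : 𝓛 → 𝓛)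
    (hfadd : ∀ x y : 𝓛, 1 ≤ v x → 1 ≤ v y →
      MvEval2 v F x y (fadd x y) ∧ 1 ≤ v (fadd x y))
    (hfneg : ∀ x : 𝓛, 1 ≤ v x → 1 ≤ v (fneg x) ∧ fadd x (fneg x) = 0)
    (n : ℕ) (hn : 1 ≤ n) :
    ∀ y : 𝓛, 1 ≤ v y →
      ∃ γ : ℕ → (Fin (d - 1) → Fin (p ^ n)) → hv.subring,
        ∀ m : ℕ, 1 ≤ m →
          ((m : ℤ) + 1 : WithTop ℤ) ≤
            v (fadd y (fneg (finFold fadd ((List.range m).map (· + 1)) (fun k =>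
              finFold fadd (Finset.univ : Finset (Fin (d - 1) → Fin (p ^ n))).toList
                (fun iv => ((γ k iv : 𝓛)) ^ (p ^ n) *
                  (∏ j : Fin (d - 1), ((T j : 𝓛)) ^ ((iv j : ℕ))) * π𝓛 ^ k))))) :=
  formal_group_series_representation_general p hp d 𝓛 v hv π𝓛 hπ 𝔽 E estep e0 res hres_surj hres_ker
    T hT K F hFK hF fadd fneg hfadd hfneg n
end

section
/- Let 𝓜/𝓛 be a finite extension of fields, each of which is a finite field extension of the standard d-dimensional local field S{{T_1}}…{{T_{d−1}}}. Then the field trace maps R_{𝓜,1} into R_{𝓛,1}: Tr_{𝓜/𝓛}(R_{𝓜,1}) ⊆ R_{𝓛,1}. -/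
universe u

lemma key_div (m a b : ℤ) (hm : 1 ≤ m) (hb : 0 < b) :
    m * a / b + 1 ≤ m * (a / b + 1) := by
  have h1 : m * a = m * (a % b) + (m * (a / b)) * b := by
    nlinarith [Int.mul_ediv_add_emod a b]
  have h2 : m * a / b = m * (a % b) / b + m * (a / b) := by
    rw [h1, Int.add_mul_ediv_right _ _ (ne_of_gt hb)]
  have h3 : m * (a % b) / b < m := by
    rw [Int.ediv_lt_iff_lt_mul hb]
    have := Int.emod_lt_of_pos a hb
    have := Int.emod_nonneg a (ne_of_gt hb)
    nlinarith
  nlinarith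

/-- Let `𝓜/𝓛` be a finite extension of fields, each a finite extension of
the standard `d`-dimensional local field `𝓚 = S{{T_1}}…{{T_{d−1}}}` (`S` a finite extension
of `ℚ_p`, `p > 2`, with ring of integers `C`).  Then the field trace maps `R_{𝓜,1}` into
`R_{𝓛,1}`: `Tr_{𝓜/𝓛}(R_{𝓜,1}) ⊆ R_{𝓛,1}`.  Here, for a finite extension `𝓝` of `𝓚`,
`𝕋_{𝓝/S} = c_{𝓚/S} ∘ Tr_{𝓝/𝓚}`, `μ_{𝓝,1} = { y : v_𝓝(y) ≥ ⌊v_𝓝(p)/(p−1)⌋ + 1 }` and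
`R_{𝓝,1} = { x : 𝕋_{𝓝/S}(x·μ_{𝓝,1}) ⊆ C }`. -/
theorem trace_maps_R1_into_R1
    (p : ℕ) (hp : p.Prime) (hp2 : 2 < p) (d : ℕ) (hd : 1 ≤ d)
    (S : Type) [Field S] (vS : S → WithTop ℤ) (hvS : IsDiscVal vS)
    -- the standard field `𝓚 = S{{T_1}}…{{T_{d−1}}}`:
    (𝓚 : Type) [Field 𝓚] (v𝓚 : 𝓚 → WithTop ℤ) (hv𝓚 : IsDiscVal v𝓚)
    (tw : AmpleTower d S vS 𝓚 v𝓚)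
    -- the finite extensions `𝓚 ⊆ 𝓛 ⊆ 𝓜`:
    (𝓛 : Type) [Field 𝓛] [Algebra 𝓚 𝓛] [FiniteDimensional 𝓚 𝓛]
    (v𝓛 : 𝓛 → WithTop ℤ) (hv𝓛 : IsDiscVal v𝓛)
    (e𝓚𝓛 : ℕ) (he𝓚𝓛 : 0 < e𝓚𝓛)
    (hcompat𝓛 : ∀ x : 𝓚, v𝓛 (algebraMap 𝓚 𝓛 x) = e𝓚𝓛 • v𝓚 x)
    (𝓜 : Type) [Field 𝓜] [Algebra 𝓚 𝓜] [Algebra 𝓛 𝓜] [IsScalarTower 𝓚 𝓛 𝓜]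
    [FiniteDimensional 𝓛 𝓜]
    (v𝓜 : 𝓜 → WithTop ℤ) (hv𝓜 : IsDiscVal v𝓜)
    (e𝓛𝓜 : ℕ) (he𝓛𝓜 : 0 < e𝓛𝓜)
    (hcompat𝓜 : ∀ x : 𝓛, v𝓜 (algebraMap 𝓛 𝓜 x) = e𝓛𝓜 • v𝓛 x)
    -- `v(p)` in `𝓛` and in `𝓜`:
    (e𝓛 : ℕ) (he𝓛 : v𝓛 (p : 𝓛) = (e𝓛 : ℤ))
    (e𝓜 : ℕ) (he𝓜 : v𝓜 (p : 𝓜) = (e𝓜 : ℤ)) :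
    ∀ x : 𝓜,
      (∀ y : 𝓜, (((e𝓜 : ℤ) / ((p : ℤ) - 1) + 1 : ℤ) : WithTop ℤ) ≤ v𝓜 y →
        tw.constCoeff (Algebra.trace 𝓚 𝓜 (x * y)) ∈ hvS.subring) →
      (∀ y : 𝓛, (((e𝓛 : ℤ) / ((p : ℤ) - 1) + 1 : ℤ) : WithTop ℤ) ≤ v𝓛 y →
        tw.constCoeff (Algebra.trace 𝓚 𝓛 (Algebra.trace 𝓛 𝓜 x * y)) ∈ hvS.subring) := by
  intro x hx y hy
  -- `e𝓜 = e𝓛𝓜 * e𝓛`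
  have hep : (e𝓜 : ℤ) = (e𝓛𝓜 : ℤ) * (e𝓛 : ℤ) := by
    have h := hcompat𝓜 (p : 𝓛)
    rw [map_natCast, he𝓜, he𝓛] at h
    have h' : ((e𝓜 : ℤ) : WithTop ℤ) = (((e𝓛𝓜 : ℤ) * (e𝓛 : ℤ) : ℤ) : WithTop ℤ) := by
      rw [h]; rfl
    exact_mod_cast h'
  -- the lifted element has big enough valuation in 𝓜
  have hy' : (((e𝓜 : ℤ) / ((p : ℤ) - 1) + 1 : ℤ) : WithTop ℤ) ≤ v𝓜 (algebraMap 𝓛 𝓜 y) := by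
    rcases eq_or_ne (v𝓛 y) ⊤ with ht | ht
    · have hy0 : y = 0 := (hv𝓛.eq_top_iff y).mp ht
      rw [hy0, map_zero, hv𝓜.v_zero]
      exact le_top
    · obtain ⟨n, hn⟩ := WithTop.ne_top_iff_exists.mp ht
      rw [hcompat𝓜, ← hn]
      have hle : (((e𝓛 : ℤ) / ((p : ℤ) - 1) + 1 : ℤ) : WithTop ℤ) ≤ (n : WithTop ℤ) := by
        rw [hn]; exact hy
      have hle' : ((e𝓛 : ℤ) / ((p : ℤ) - 1) + 1 : ℤ) ≤ n := by exact_mod_cast hle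
      have hsmul : e𝓛𝓜 • ((n : ℤ) : WithTop ℤ) = (((e𝓛𝓜 : ℤ) * n : ℤ) : WithTop ℤ) := rfl
      rw [hsmul]
      have hb : (0 : ℤ) < (p : ℤ) - 1 := by
        have : (2 : ℤ) < (p : ℤ) := by exact_mod_cast hp2
        omega
      have hm : (1 : ℤ) ≤ (e𝓛𝓜 : ℤ) := by exact_mod_cast he𝓛𝓜
      have key := key_div (e𝓛𝓜 : ℤ) (e𝓛 : ℤ) ((p : ℤ) - 1) hm hb
      have : (e𝓜 : ℤ) / ((p : ℤ) - 1) + 1 ≤ (e𝓛𝓜 : ℤ) * n := by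
        rw [hep, mul_comm ((e𝓛𝓜 : ℤ)) ((e𝓛 : ℤ))]
        calc (e𝓛 : ℤ) * (e𝓛𝓜 : ℤ) / ((p : ℤ) - 1) + 1
            = (e𝓛𝓜 : ℤ) * (e𝓛 : ℤ) / ((p : ℤ) - 1) + 1 := by ring_nf
          _ ≤ (e𝓛𝓜 : ℤ) * ((e𝓛 : ℤ) / ((p : ℤ) - 1) + 1) := key
          _ ≤ (e𝓛𝓜 : ℤ) * n := by
              have := mul_le_mul_of_nonneg_left hle' (by linarith : (0:ℤ) ≤ (e𝓛𝓜 : ℤ))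
              linarith
      exact_mod_cast this
  have h := hx (algebraMap 𝓛 𝓜 y) hy'
  have htr : Algebra.trace 𝓚 𝓜 (x * algebraMap 𝓛 𝓜 y)
      = Algebra.trace 𝓚 𝓛 (Algebra.trace 𝓛 𝓜 x * y) := by
    rw [← Algebra.trace_trace (S := 𝓛)]
    congr 1
    rw [mul_comm x, ← Algebra.smul_def, map_smul, smul_eq_mul, mul_comm]
  rwa [htr] at h
end
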